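/- Characterization of μ (Lemma 1): Let T be a rooted weighted tree, u a vertex with children u_1,…,u_d and parent edge e_u, ξ ≥ 0, k ≥ 1, l ≥ 0. Then μ_ξ(u,k,l) = 1 if and only if either Γ_ξ(u,k,l) ≤ ξ·ω(T_u) − c(e_u), or there exist nonnegative integers k_1+⋯+k_d = k and l_1+⋯+l_d = l−1 with μ_ξ(u_i,k_i,l_i) = 1 for all 1 ≤ i ≤ d. -/

import Mathlib

open scoped Classical

noncomputable section

/-- A finite rooted weighted tree, encoded by a parent function. The root has an
auxiliary parent edge `e_root` of weight `0` (`parent root = root`). Edges are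
identified with their lower endpoints: the parent edge `e_v` of a vertex `v`
has weight `c v`. -/
structure RTree (V : Type) [Fintype V] [DecidableEq V] where
  root : V
  parent : V → V
  w : V → ℚ
  c : V → ℚ
  parent_root : parent root = root
  reaches_root : ∀ v : V, ∃ n : ℕ, parent^[n] v = root
  w_pos : ∀ v : V, 0 < w v
  c_pos : ∀ v : V, v ≠ root → 0 < c v
  c_root : c root = 0

namespace RTree

variable {V : Type} [Fintype V] [DecidableEq V] (T : RTree V)

/-- `v` lies in the subtree rooted at `u` (equivalently, edge `e_v ≤ e_u` in the
natural partial order induced by the root). -/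
def below (u v : V) : Prop := ∃ n : ℕ, T.parent^[n] v = u

/-- The vertex set of the subtree `T_u` (also of `T_{e_u}`). -/
def desc (u : V) : Finset V := Finset.univ.filter (fun v => T.below u v)

/-- Total vertex weight `ω(A)`. -/
def wsum (A : Finset V) : ℚ := ∑ v ∈ A, T.w v

/-- The (lower endpoints of) edges with exactly one endpoint in `A`, relative to a
ground set `W` of edges/vertices (`W = univ` gives the whole tree `T`). -/
def boundaryW (W A : Finset V) : Finset V :=
  W.filter (fun v => Xor' (v ∈ A) (T.parent v ∈ A))

/-- The edge boundary `∂A` in the whole tree. -/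
def boundary (A : Finset V) : Finset V := T.boundaryW Finset.univ A

/-- `c(∂A)` relative to ground set `W`. -/
def cutW (W A : Finset V) : ℚ := ∑ v ∈ T.boundaryW W A, T.c v

/-- `c(∂A)` in the whole tree. -/
def cut (A : Finset V) : ℚ := T.cutW Finset.univ A

/-- Vertex set of the subtree `T_u` relative to the ground set `W`. -/
def descW (W : Finset V) (u : V) : Finset V := T.desc u ∩ W

/-- `ε_ξ(e_v) = ξ·ω(T_{e_v}) + c(e_v)`. -/
def eps (ξ : ℚ) (v : V) : ℚ := ξ * T.wsum (T.desc v) + T.c v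

/-- `A` induces a connected subgraph (a subtree) of the tree: some `a ∈ A` is
reachable from every `v ∈ A` by a parent-chain staying inside `A`. -/
def connectedIn (A : Finset V) : Prop :=
  ∃ a ∈ A, ∀ v ∈ A, ∃ n : ℕ, T.parent^[n] v = a ∧ ∀ m : ℕ, m ≤ n → T.parent^[m] v ∈ A

/-- The children of a vertex. -/
def children (u : V) : Finset V :=
  Finset.univ.filter (fun v => T.parent v = u ∧ v ≠ u)

/-- `A` witnesses `μ_ξ(u,k,l) = 1` relative to ground set `W`: a connected
`k`-subpartition of `T_u` whose parts all have conductance at most `ξ`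
(boundaries computed in the ground set), with at most `l` residue vertices. -/
def muWitnessW (W : Finset V) (ξ : ℚ) (u : V) {k : ℕ} (A : Fin k → Finset V) (l : ℕ) : Prop :=
  (∀ i, (A i).Nonempty) ∧ (∀ i j, i ≠ j → Disjoint (A i) (A j)) ∧
  (∀ i, A i ⊆ T.descW W u) ∧ (∀ i, T.connectedIn (A i)) ∧
  (∀ i, T.cutW W (A i) / T.wsum (A i) ≤ ξ) ∧
  ((T.descW W u \ Finset.univ.biUnion A).card ≤ l)

/-- `μ_ξ(u,k,l) = 1` relative to ground set `W`. -/
def muW (W : Finset V) (ξ : ℚ) (u : V) (k l : ℕ) : Prop :=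
  ∃ A : Fin k → Finset V, T.muWitnessW W ξ u A l

/-- `A` witnesses `μ_ξ(u,k,l) = 1` (in the whole tree `T`). -/
def muWitness (ξ : ℚ) (u : V) {k : ℕ} (A : Fin k → Finset V) (l : ℕ) : Prop :=
  T.muWitnessW Finset.univ ξ u A l

/-- `μ_ξ(u,k,l) = 1`. -/
def mu (ξ : ℚ) (u : V) (k l : ℕ) : Prop := T.muW Finset.univ ξ u k l

/-- Membership in `𝒞_ξ(u,k,l)` relative to ground set `W`: a connected
`k`-subpartition of `T_u` with `u ∈ A₁`, residue at most `l`, and conductance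
at most `ξ` for every part other than `A₁`. -/
def inCW (W : Finset V) (ξ : ℚ) (u : V) {k : ℕ} (A : Fin k → Finset V) (l : ℕ) : Prop :=
  (∀ i, (A i).Nonempty) ∧ (∀ i j, i ≠ j → Disjoint (A i) (A j)) ∧
  (∀ i, A i ⊆ T.descW W u) ∧ (∀ i, T.connectedIn (A i)) ∧
  (∀ h : 0 < k, u ∈ A ⟨0, h⟩) ∧
  (∀ i : Fin k, i.val ≠ 0 → T.cutW W (A i) / T.wsum (A i) ≤ ξ) ∧
  ((T.descW W u \ Finset.univ.biUnion A).card ≤ l)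

/-- Membership in `𝒞_ξ(u,k,l)`. -/
def inC (ξ : ℚ) (u : V) {k : ℕ} (A : Fin k → Finset V) (l : ℕ) : Prop :=
  T.inCW Finset.univ ξ u A l

/-- `γ_ξ(𝒜) = Σ_{e ∈ ∂A₁ \ {e_u}} ε_ξ(e)` relative to ground set `W`. -/
def gammaValW (W : Finset V) (ξ : ℚ) (u : V) (A1 : Finset V) : ℚ :=
  ∑ v ∈ (T.boundaryW W A1).erase u, (ξ * T.wsum (T.descW W v) + T.c v)

/-- `γ_ξ(𝒜) = Σ_{e ∈ ∂A₁ \ {e_u}} ε_ξ(e)`. -/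
def gammaVal (ξ : ℚ) (u : V) (A1 : Finset V) : ℚ := T.gammaValW Finset.univ ξ u A1

/-- `Γ_ξ(u,k,l) = min over 𝒞_ξ(u,k,l) of γ_ξ`, with value `+∞` (`⊤` of `EReal`)
when `𝒞_ξ(u,k,l)` is empty, relative to ground set `W`. -/
def GammaW (W : Finset V) (ξ : ℚ) (u : V) (k l : ℕ) : EReal :=
  sInf {x : EReal | ∃ (h : 0 < k) (A : Fin k → Finset V),
    T.inCW W ξ u A l ∧ x = ((T.gammaValW W ξ u (A ⟨0, h⟩) : ℝ) : EReal)}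

/-- `Γ_ξ(u,k,l)`. -/
def Gamma (ξ : ℚ) (u : V) (k l : ℕ) : EReal := T.GammaW Finset.univ ξ u k l

end RTree

/-! If a part `A` of a witness contains `u`, it is a subtree of `T_u` with top vertex `u`, so
`T_u` is the disjoint union of `A` and the subtrees hanging from its fringe, whose parent edges
together with `e_u` form `∂A`. This gives `γ_ξ(A) = ξ(ω(T_u) − ω(A)) + c(∂A) − c(e_u)`, so the
bound `γ_ξ(A) ≤ ξ·ω(T_u) − c(e_u)` says exactly `φ(A) ≤ ξ`: witnesses covering `u` are the
members of `𝒞_ξ(u,k,l)` that meet the bound. If no part contains `u`, each part lies below a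
single child; grouping the parts by child splits the witness into witnesses for the children,
and since `u` itself is residue their residues add up to at most `l − 1` (the slack goes to any
child that receives a part, which exists as `k ≥ 1`). Conversely, witnesses for the children
combine into one for `u`. -/

lemma Finset.univ_biUnion_comp_equiv {α ι κ : Type*} [DecidableEq α] [Fintype ι] [Fintype κ]
    (A : ι → Finset α) (e : κ ≃ ι) : Finset.univ.biUnion (A ∘ e) = Finset.univ.biUnion A := by
  ext x
  simp only [Finset.mem_biUnion, Finset.mem_univ, true_and, Function.comp_apply]
  exact (e.surjective.exists (p := fun i => x ∈ A i)).symm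

lemma Finset.exists_le_sum_eq_of_sum_le {ι : Type*} {s : Finset ι} {a : ι → ℕ} {n : ℕ}
    (hs : s.Nonempty) (h : ∑ i ∈ s, a i ≤ n) : ∃ b : ι → ℕ, a ≤ b ∧ ∑ i ∈ s, b i = n := by
  obtain ⟨i₀, hi₀⟩ := hs
  refine ⟨fun i => a i + if i = i₀ then n - ∑ i ∈ s, a i else 0,
    fun i => Nat.le_add_right _ _, ?_⟩
  rw [Finset.sum_add_distrib, Finset.sum_ite_eq' s i₀, if_pos hi₀]
  omega

namespace RTree

variable {V : Type} [Fintype V] [DecidableEq V] (T : RTree V)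

lemma eq_root_of_isPeriodicPt {v : V} {p : ℕ} (hp : 0 < p)
    (h : Function.IsPeriodicPt T.parent p v) : v = T.root := by
  obtain ⟨N, hN⟩ := T.reaches_root v
  calc v = T.parent^[p * N] v := ((h.mul_const N).eq).symm
    _ = T.parent^[p * N - N] (T.parent^[N] v) := by
      rw [← Function.iterate_add_apply, Nat.sub_add_cancel (Nat.le_mul_of_pos_left N hp)]
    _ = T.root := by rw [hN, Function.iterate_fixed T.parent_root]

lemma below_refl (u : V) : T.below u u := ⟨0, rfl⟩

lemma below_parent (v : V) : T.below (T.parent v) v := ⟨1, rfl⟩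

lemma below_trans {a b c : V} (hab : T.below a b) (hbc : T.below b c) : T.below a c := by
  obtain ⟨n, hn⟩ := hab
  obtain ⟨m, hm⟩ := hbc
  exact ⟨n + m, by rw [Function.iterate_add_apply, hm, hn]⟩

lemma below_antisymm {a b : V} (hab : T.below a b) (hba : T.below b a) : a = b := by
  obtain ⟨n, hn⟩ := hab
  obtain ⟨m, hm⟩ := hba
  rcases Nat.eq_zero_or_pos (m + n) with h | h
  · obtain ⟨rfl, rfl⟩ := Nat.add_eq_zero_iff.mp h
    exact hn.symm
  · have hb : b = T.root :=
      T.eq_root_of_isPeriodicPt h (by rw [Function.IsPeriodicPt, Function.IsFixedPt,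
        Function.iterate_add_apply, hn, hm])
    rw [← hn, hb, Function.iterate_fixed T.parent_root]

lemma below_total_of_below {u v x : V} (hu : T.below u x) (hv : T.below v x) :
    T.below u v ∨ T.below v u := by
  obtain ⟨a, ha⟩ := hu
  obtain ⟨b, hb⟩ := hv
  rcases le_total a b with h | h
  · exact Or.inr ⟨b - a, by rw [← ha, ← Function.iterate_add_apply, Nat.sub_add_cancel h, hb]⟩
  · exact Or.inl ⟨a - b, by rw [← hb, ← Function.iterate_add_apply, Nat.sub_add_cancel h, ha]⟩

lemma mem_desc {u v : V} : v ∈ T.desc u ↔ T.below u v := by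
  simp [desc]

lemma self_mem_desc (u : V) : u ∈ T.desc u := T.mem_desc.mpr (T.below_refl u)

lemma desc_subset_desc {u v : V} (h : T.below u v) : T.desc v ⊆ T.desc u :=
  fun _ hx => T.mem_desc.mpr (T.below_trans h (T.mem_desc.mp hx))

lemma parent_mem_desc {u v : V} (hv : v ∈ T.desc u) (hne : v ≠ u) : T.parent v ∈ T.desc u := by
  obtain ⟨n, hn⟩ := T.mem_desc.mp hv
  cases n with
  | zero => exact absurd hn hne
  | succ n => exact T.mem_desc.mpr ⟨n, hn⟩

lemma mem_desc_of_parent_mem_desc {u v : V} (h : T.parent v ∈ T.desc u) : v ∈ T.desc u :=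
  T.desc_subset_desc (T.mem_desc.mp h) (T.mem_desc.mpr (T.below_parent v))

lemma parent_notMem_desc {u : V} (hu : u ≠ T.root) : T.parent u ∉ T.desc u := by
  intro h
  obtain ⟨n, hn⟩ := T.mem_desc.mp h
  exact hu (T.eq_root_of_isPeriodicPt n.succ_pos hn)

lemma exists_exit_of_below {A : Finset V} {u x : V} (hx : T.below u x) (hu : u ∈ A)
    (hxA : x ∉ A) : ∃ v, x ∈ T.desc v ∧ v ∉ A ∧ T.parent v ∈ A := by
  obtain ⟨n, hn⟩ := hx
  induction n generalizing x with
  | zero => exact absurd (by rwa [← hn] at hu) hxA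
  | succ n ih =>
    by_cases hp : T.parent x ∈ A
    · exact ⟨x, T.self_mem_desc x, hxA, hp⟩
    · obtain ⟨v, hxv, hvA, hpv⟩ := ih (x := T.parent x) hp hn
      exact ⟨v, T.mem_desc_of_parent_mem_desc hxv, hvA, hpv⟩

lemma mem_children {u v : V} : v ∈ T.children u ↔ T.parent v = u ∧ v ≠ u := by
  simp [children]

lemma mem_boundary {A : Finset V} {v : V} :
    v ∈ T.boundary A ↔ (v ∈ A ∧ T.parent v ∉ A) ∨ (T.parent v ∈ A ∧ v ∉ A) := by
  simp only [boundary, boundaryW, Finset.mem_filter, Finset.mem_univ, true_and]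
  rfl

lemma wsum_pos {A : Finset V} (hA : A.Nonempty) : 0 < T.wsum A :=
  Finset.sum_pos (fun v _ => T.w_pos v) hA

@[simp] lemma descW_univ (u : V) : T.descW Finset.univ u = T.desc u := by
  simp [descW]

section RootedSubtree

structure IsRootedSubtree (A : Finset V) (u : V) : Prop where
  connectedIn : T.connectedIn A
  mem : u ∈ A
  subset_desc : A ⊆ T.desc u

def fringe (A : Finset V) : Finset V :=
  Finset.univ.filter (fun v => v ∉ A ∧ T.parent v ∈ A)

lemma mem_fringe {A : Finset V} {v : V} : v ∈ T.fringe A ↔ v ∉ A ∧ T.parent v ∈ A := by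
  simp [fringe]

lemma fringe_singleton (u : V) : T.fringe {u} = T.children u := by
  ext v
  simp [mem_fringe, mem_children, and_comm]

lemma isRootedSubtree_singleton (u : V) : T.IsRootedSubtree {u} u where
  connectedIn := ⟨u, Finset.mem_singleton_self u, fun v hv =>
    ⟨0, Finset.mem_singleton.mp hv, fun m hm => by
      rw [Nat.le_zero.mp hm]; exact hv⟩⟩
  mem := Finset.mem_singleton_self u
  subset_desc := Finset.singleton_subset_iff.mpr (T.self_mem_desc u)

lemma subset_desc_of_connectedIn {A : Finset V} (hA : T.connectedIn A) :
    ∃ a ∈ A, A ⊆ T.desc a := by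
  obtain ⟨a, ha, hchain⟩ := hA
  refine ⟨a, ha, fun x hx => T.mem_desc.mpr ?_⟩
  obtain ⟨n, hn, -⟩ := hchain x hx
  exact ⟨n, hn⟩

variable {T}

namespace IsRootedSubtree

variable {A : Finset V} {u : V}

lemma mem_of_below (hA : T.IsRootedSubtree A u) {x y : V} (hx : x ∈ A) (hy : y ∈ T.desc u)
    (hyx : T.below y x) : y ∈ A := by
  obtain ⟨a, ha, hchain⟩ := hA.connectedIn
  have hau : a = u := by
    obtain ⟨n, hn, -⟩ := hchain u hA.mem
    exact T.below_antisymm ⟨n, hn⟩ (T.mem_desc.mp (hA.subset_desc ha))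
  subst hau
  obtain ⟨n, hn, hpath⟩ := hchain x hx
  obtain ⟨j, hj⟩ := hyx
  rcases le_or_gt j n with h | h
  · exact hj ▸ hpath j h
  · have hya : T.below y a :=
      ⟨j - n, by rw [← hn, ← Function.iterate_add_apply, Nat.sub_add_cancel h.le, hj]⟩
    rw [T.below_antisymm hya (T.mem_desc.mp hy)]
    exact ha

lemma parent_mem (hA : T.IsRootedSubtree A u) {v : V} (hv : v ∈ A) (hne : v ≠ u) :
    T.parent v ∈ A :=
  hA.mem_of_below hv (T.parent_mem_desc (hA.subset_desc hv) hne) (T.below_parent v)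

lemma mem_desc_of_mem_fringe (hA : T.IsRootedSubtree A u) {v : V} (hv : v ∈ T.fringe A) :
    v ∈ T.desc u :=
  T.mem_desc_of_parent_mem_desc (hA.subset_desc (T.mem_fringe.mp hv).2)

lemma disjoint_desc_of_mem_fringe (hA : T.IsRootedSubtree A u) {v : V} (hv : v ∈ T.fringe A) :
    Disjoint A (T.desc v) :=
  Finset.disjoint_left.mpr fun _ hx hxv =>
    (T.mem_fringe.mp hv).1 (hA.mem_of_below hx (hA.mem_desc_of_mem_fringe hv) (T.mem_desc.mp hxv))

lemma not_below_of_mem_fringe (hA : T.IsRootedSubtree A u) {v v' : V} (hv : v ∈ T.fringe A)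
    (hv' : v' ∈ T.fringe A) (hne : v ≠ v') : ¬ T.below v v' := fun h =>
  Finset.disjoint_left.mp (hA.disjoint_desc_of_mem_fringe hv) (T.mem_fringe.mp hv').2
    (T.parent_mem_desc (T.mem_desc.mpr h) hne.symm)

lemma pairwiseDisjoint_desc_fringe (hA : T.IsRootedSubtree A u) :
    (T.fringe A : Set V).PairwiseDisjoint T.desc := by
  intro v hv v' hv' hne
  refine Finset.disjoint_left.mpr fun x hx hx' => ?_
  rcases T.below_total_of_below (T.mem_desc.mp hx) (T.mem_desc.mp hx') with h | h
  · exact hA.not_below_of_mem_fringe hv hv' hne h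
  · exact hA.not_below_of_mem_fringe hv' hv hne.symm h

lemma desc_eq_union (hA : T.IsRootedSubtree A u) :
    T.desc u = A ∪ (T.fringe A).biUnion T.desc := by
  ext x
  simp only [Finset.mem_union, Finset.mem_biUnion]
  constructor
  · intro hx
    by_cases hxA : x ∈ A
    · exact Or.inl hxA
    · obtain ⟨v, hxv, hvA, hpv⟩ := T.exists_exit_of_below (T.mem_desc.mp hx) hA.mem hxA
      exact Or.inr ⟨v, T.mem_fringe.mpr ⟨hvA, hpv⟩, hxv⟩
  · rintro (hx | ⟨v, hv, hxv⟩)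
    · exact hA.subset_desc hx
    · exact T.desc_subset_desc (T.mem_desc.mp (hA.mem_desc_of_mem_fringe hv)) hxv

lemma wsum_desc_eq (hA : T.IsRootedSubtree A u) :
    T.wsum (T.desc u) = T.wsum A + ∑ v ∈ T.fringe A, T.wsum (T.desc v) := by
  have hdisj : Disjoint A ((T.fringe A).biUnion T.desc) :=
    (Finset.disjoint_biUnion_right _ _ _).mpr fun _ hv => hA.disjoint_desc_of_mem_fringe hv
  rw [wsum, hA.desc_eq_union, Finset.sum_union hdisj,
    Finset.sum_biUnion hA.pairwiseDisjoint_desc_fringe]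
  rfl

lemma boundary_erase_eq_fringe (hA : T.IsRootedSubtree A u) :
    (T.boundary A).erase u = T.fringe A := by
  ext v
  rw [Finset.mem_erase, mem_boundary, mem_fringe]
  constructor
  · rintro ⟨hne, ⟨hv, hpv⟩ | h⟩
    · exact absurd (hA.parent_mem hv hne) hpv
    · exact h.symm
  · rintro ⟨hv, hpv⟩
    exact ⟨fun h => hv (h ▸ hA.mem), Or.inr ⟨hpv, hv⟩⟩

/-- The parent edge of `u` is in `∂A` unless `u` is the root, whose auxiliary edge weighs `0`. -/
lemma sum_c_boundary_erase (hA : T.IsRootedSubtree A u) :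
    ∑ v ∈ (T.boundary A).erase u, T.c v = T.cut A - T.c u := by
  rw [eq_sub_iff_add_eq', cut, cutW]
  by_cases hroot : u = T.root
  · rw [hroot, T.c_root, zero_add, Finset.sum_erase _ T.c_root]
    rfl
  · refine Finset.add_sum_erase _ _ ?_
    exact T.mem_boundary.mpr <|
      Or.inl ⟨hA.mem, fun h => T.parent_notMem_desc hroot (hA.subset_desc h)⟩

lemma gammaVal_eq (hA : T.IsRootedSubtree A u) (ξ : ℚ) :
    T.gammaVal ξ u A = ξ * (T.wsum (T.desc u) - T.wsum A) + (T.cut A - T.c u) := by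
  have hfringe : ∑ v ∈ T.fringe A, T.wsum (T.desc v) = T.wsum (T.desc u) - T.wsum A := by
    rw [hA.wsum_desc_eq]; ring
  change ∑ v ∈ (T.boundary A).erase u, (ξ * T.wsum (T.desc v ∩ Finset.univ) + T.c v) = _
  rw [Finset.sum_add_distrib, hA.sum_c_boundary_erase, ← Finset.mul_sum,
    hA.boundary_erase_eq_fringe]
  simp only [Finset.inter_univ, hfringe]

lemma gammaVal_le_iff (hA : T.IsRootedSubtree A u) (ξ : ℚ) :
    T.gammaVal ξ u A ≤ ξ * T.wsum (T.desc u) - T.c u ↔ T.cut A / T.wsum A ≤ ξ := by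
  rw [hA.gammaVal_eq, div_le_iff₀ (T.wsum_pos ⟨u, hA.mem⟩)]
  constructor <;> intro h <;> linarith

end IsRootedSubtree

end RootedSubtree

lemma desc_eq_insert_biUnion_children (u : V) :
    T.desc u = insert u ((T.children u).biUnion T.desc) := by
  rw [(T.isRootedSubtree_singleton u).desc_eq_union, fringe_singleton, Finset.insert_eq]

lemma notMem_biUnion_desc_children (u : V) : u ∉ (T.children u).biUnion T.desc := by
  rw [← fringe_singleton, Finset.mem_biUnion]
  rintro ⟨v, hv, huv⟩
  exact Finset.disjoint_left.mp ((T.isRootedSubtree_singleton u).disjoint_desc_of_mem_fringe hv)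
    (Finset.mem_singleton_self u) huv

lemma pairwiseDisjoint_desc_children (u : V) :
    (T.children u : Set V).PairwiseDisjoint T.desc := by
  rw [← fringe_singleton]
  exact (T.isRootedSubtree_singleton u).pairwiseDisjoint_desc_fringe

lemma desc_subset_of_mem_children {u v : V} (hv : v ∈ T.children u) : T.desc v ⊆ T.desc u :=
  T.desc_subset_desc ⟨1, (T.mem_children.mp hv).1⟩

lemma card_desc_sdiff {u : V} {X : Finset V} (hu : u ∉ X) :
    (T.desc u \ X).card = ∑ v ∈ T.children u, (T.desc v \ X).card + 1 := by
  have hbiUnion : (T.children u).biUnion T.desc \ X = (T.children u).biUnion (T.desc · \ X) := by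
    ext x
    simp only [Finset.mem_sdiff, Finset.mem_biUnion]
    tauto
  rw [T.desc_eq_insert_biUnion_children u, Finset.insert_sdiff_of_notMem _ hu, hbiUnion,
    Finset.card_insert_of_notMem, Finset.card_biUnion]
  · exact (T.pairwiseDisjoint_desc_children u).mono fun _ => Finset.sdiff_subset
  · rw [← hbiUnion]
    exact fun h => T.notMem_biUnion_desc_children u (Finset.mem_sdiff.mp h).1

lemma exists_child_subset_desc {A : Finset V} {u : V} (hc : T.connectedIn A)
    (hA : A ⊆ T.desc u) (hu : u ∉ A) : ∃ v ∈ T.children u, A ⊆ T.desc v := by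
  obtain ⟨a, ha, hAa⟩ := T.subset_desc_of_connectedIn hc
  obtain ⟨v, hav, hvu, hpv⟩ := T.exists_exit_of_below (T.mem_desc.mp (hA ha))
    (Finset.mem_singleton_self u) (fun h => hu (Finset.mem_singleton.mp h ▸ ha))
  refine ⟨v, ?_, hAa.trans (T.desc_subset_desc (T.mem_desc.mp hav))⟩
  rw [← fringe_singleton]
  exact T.mem_fringe.mpr ⟨hvu, hpv⟩

section Gamma

variable {ξ : ℚ} {u : V} {k l : ℕ}

lemma Gamma_le_coe_iff {b : ℚ} :
    T.Gamma ξ u k l ≤ ((b : ℝ) : EReal) ↔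
      ∃ (h : 0 < k) (A : Fin k → Finset V), T.inC ξ u A l ∧ T.gammaVal ξ u (A ⟨0, h⟩) ≤ b := by
  set S : Set EReal := {x | ∃ (h : 0 < k) (A : Fin k → Finset V), T.inCW Finset.univ ξ u A l ∧
    x = ((T.gammaValW Finset.univ ξ u (A ⟨0, h⟩) : ℝ) : EReal)}
  change sInf S ≤ _ ↔ _
  constructor
  · intro hΓ
    have hS : S.Nonempty := by
      refine Set.nonempty_iff_ne_empty.mpr fun hS => ?_
      rw [hS, sInf_empty] at hΓ
      simp at hΓ
    obtain ⟨_, hk, -⟩ := id hS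
    have hfin : S.Finite := (Set.finite_range fun A : Fin k → Finset V =>
      ((T.gammaValW Finset.univ ξ u (A ⟨0, hk⟩) : ℝ) : EReal)).subset
        fun _ ⟨_, A, _, hx⟩ => ⟨A, hx.symm⟩
    obtain ⟨h, A, hA, hx⟩ := hS.csInf_mem hfin
    rw [hx] at hΓ
    exact ⟨h, A, hA, by exact_mod_cast hΓ⟩
  · rintro ⟨h, A, hA, hb⟩
    calc sInf S ≤ ((T.gammaVal ξ u (A ⟨0, h⟩) : ℝ) : EReal) := sInf_le ⟨h, A, hA, rfl⟩
      _ ≤ _ := by exact_mod_cast hb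

lemma Gamma_le_of_muWitness_of_mem {A : Fin k → Finset V} (hA : T.muWitness ξ u A l)
    {i : Fin k} (hi : u ∈ A i) :
    T.Gamma ξ u k l ≤ (((ξ * T.wsum (T.desc u) - T.c u : ℚ) : ℝ) : EReal) := by
  obtain ⟨hne, hdisj, hsub, hconn, hcond, hres⟩ := hA
  have hk : 0 < k := i.pos
  set e := Equiv.swap (⟨0, hk⟩ : Fin k) i
  have hroot : T.IsRootedSubtree (A i) u := ⟨hconn i, hi, by simpa using hsub i⟩
  have hC : T.inC ξ u (A ∘ e) l :=
    ⟨fun _ => hne _, fun _ _ hjj' => hdisj _ _ (e.injective.ne hjj'), fun _ => hsub _,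
      fun _ => hconn _, fun _ => by simpa [e] using hi, fun _ _ => hcond _,
      by rwa [Finset.univ_biUnion_comp_equiv]⟩
  refine T.Gamma_le_coe_iff.mpr ⟨hk, A ∘ e, hC, ?_⟩
  simpa [e] using (hroot.gammaVal_le_iff ξ).mpr (hcond i)

lemma muWitness_of_inC {A : Fin k → Finset V} (hA : T.inC ξ u A l) (hk : 0 < k)
    (hγ : T.gammaVal ξ u (A ⟨0, hk⟩) ≤ ξ * T.wsum (T.desc u) - T.c u) :
    T.muWitness ξ u A l := by
  obtain ⟨hne, hdisj, hsub, hconn, hu, hcond, hres⟩ := hA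
  refine ⟨hne, hdisj, hsub, hconn, fun i => ?_, hres⟩
  by_cases hi : i.val = 0
  · obtain rfl : i = ⟨0, hk⟩ := Fin.ext hi
    have hroot : T.IsRootedSubtree (A ⟨0, hk⟩) u := ⟨hconn _, hu hk, by simpa using hsub _⟩
    exact (hroot.gammaVal_le_iff ξ).mp hγ
  · exact hcond i hi

lemma mu_of_Gamma_le
    (hΓ : T.Gamma ξ u k l ≤ (((ξ * T.wsum (T.desc u) - T.c u : ℚ) : ℝ) : EReal)) :
    T.mu ξ u k l := by
  obtain ⟨hk, A, hA, hγ⟩ := T.Gamma_le_coe_iff.mp hΓ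
  exact ⟨A, T.muWitness_of_inC hA hk hγ⟩

end Gamma

/-- `muWitness` with parts indexed by an arbitrary finite type, so that sub-families and
disjoint unions of witnesses need no renumbering. -/
structure IsMuWitness (ξ : ℚ) (u : V) {ι : Type} [Fintype ι] (A : ι → Finset V) (l : ℕ) :
    Prop where
  nonempty : ∀ i, (A i).Nonempty
  pairwise_disjoint : Pairwise (Function.onFun Disjoint A)
  subset_desc : ∀ i, A i ⊆ T.desc u
  connectedIn : ∀ i, T.connectedIn (A i)
  cut_div_wsum_le : ∀ i, T.cut (A i) / T.wsum (A i) ≤ ξ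
  card_residue_le : (T.desc u \ Finset.univ.biUnion A).card ≤ l

section MuWitness

variable {ξ : ℚ} {u : V} {l : ℕ}

lemma muWitness_iff_isMuWitness {k : ℕ} {A : Fin k → Finset V} :
    T.muWitness ξ u A l ↔ T.IsMuWitness ξ u A l := by
  simp only [muWitness, muWitnessW, descW_univ]
  exact ⟨fun ⟨h₁, h₂, h₃, h₄, h₅, h₆⟩ => ⟨h₁, h₂, h₃, h₄, h₅, h₆⟩,
    fun ⟨h₁, h₂, h₃, h₄, h₅, h₆⟩ => ⟨h₁, h₂, h₃, h₄, h₅, h₆⟩⟩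

variable {T}

lemma IsMuWitness.comp_equiv {ι κ : Type} [Fintype ι] [Fintype κ] {A : ι → Finset V}
    (hA : T.IsMuWitness ξ u A l) (e : κ ≃ ι) : T.IsMuWitness ξ u (A ∘ e) l where
  nonempty _ := hA.nonempty _
  pairwise_disjoint _ _ h := hA.pairwise_disjoint (e.injective.ne h)
  subset_desc _ := hA.subset_desc _
  connectedIn _ := hA.connectedIn _
  cut_div_wsum_le _ := hA.cut_div_wsum_le _
  card_residue_le := by rw [Finset.univ_biUnion_comp_equiv]; exact hA.card_residue_le

lemma IsMuWitness.mu {ι : Type} [Fintype ι] {A : ι → Finset V} (hA : T.IsMuWitness ξ u A l) :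
    T.mu ξ u (Fintype.card ι) l :=
  ⟨A ∘ (Fintype.equivFin ι).symm, T.muWitness_iff_isMuWitness.mpr (hA.comp_equiv _)⟩

lemma IsMuWitness.restrict_child {ι : Type} [Fintype ι] {A : ι → Finset V}
    (hA : T.IsMuWitness ξ u A l) {ch : ι → V} (hch : ∀ i, ch i ∈ T.children u)
    (hAch : ∀ i, A i ⊆ T.desc (ch i)) {v : V} (hv : v ∈ T.children u) :
    T.IsMuWitness ξ v (fun i : {i // ch i = v} => A i)
      (T.desc v \ Finset.univ.biUnion A).card where
  nonempty i := hA.nonempty i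
  pairwise_disjoint _ _ h := hA.pairwise_disjoint (Subtype.coe_injective.ne h)
  subset_desc i := (hAch i).trans_eq (congrArg T.desc i.2)
  connectedIn i := hA.connectedIn i
  cut_div_wsum_le i := hA.cut_div_wsum_le i
  card_residue_le := by
    refine Finset.card_le_card fun x hx => ?_
    simp only [Finset.mem_sdiff, Finset.mem_biUnion, Finset.mem_univ, true_and,
      not_exists] at hx ⊢
    refine ⟨hx.1, fun i hxi => ?_⟩
    by_cases hi : ch i = v
    · exact hx.2 ⟨i, hi⟩ hxi
    · exact Finset.disjoint_left.mp (T.pairwiseDisjoint_desc_children u (hch i) hv hi)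
        (hAch i hxi) hx.1

lemma isMuWitness_sigma {f : T.children u → ℕ} {g : V → ℕ}
    {B : ∀ v : T.children u, Fin (f v) → Finset V}
    (hB : ∀ v : T.children u, T.IsMuWitness ξ v (B v) (g v)) :
    T.IsMuWitness ξ u (fun p : Σ v, Fin (f v) => B p.1 p.2) (∑ v ∈ T.children u, g v + 1) where
  nonempty p := (hB p.1).nonempty p.2
  pairwise_disjoint := by
    rintro ⟨v, j⟩ ⟨w, j'⟩ hne
    by_cases hvw : v = w
    · subst hvw
      exact (hB v).pairwise_disjoint fun h => hne (congrArg _ h)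
    · exact ((T.pairwiseDisjoint_desc_children u) v.2 w.2
        (Subtype.coe_injective.ne hvw)).mono ((hB v).subset_desc j) ((hB w).subset_desc j')
  subset_desc p := ((hB p.1).subset_desc p.2).trans (T.desc_subset_of_mem_children p.1.2)
  connectedIn p := (hB p.1).connectedIn p.2
  cut_div_wsum_le p := (hB p.1).cut_div_wsum_le p.2
  card_residue_le := by
    have hu : u ∉ Finset.univ.biUnion (fun p : Σ v, Fin (f v) => B p.1 p.2) := by
      simp only [Finset.mem_biUnion, Finset.mem_univ, true_and, not_exists]
      intro p hup
      exact T.notMem_biUnion_desc_children u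
        (Finset.mem_biUnion.mpr ⟨p.1, p.1.2, (hB p.1).subset_desc p.2 hup⟩)
    rw [T.card_desc_sdiff hu, add_le_add_iff_right]
    refine Finset.sum_le_sum fun v hv => le_trans (Finset.card_le_card ?_)
      (hB ⟨v, hv⟩).card_residue_le
    refine Finset.sdiff_subset_sdiff le_rfl fun x hx => ?_
    obtain ⟨j, -, hxj⟩ := Finset.mem_biUnion.mp hx
    exact Finset.mem_biUnion.mpr ⟨⟨⟨v, hv⟩, j⟩, Finset.mem_univ _, hxj⟩

lemma mu_of_forall_children_mu {f g : V → ℕ}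
    (hmu : ∀ v ∈ T.children u, T.mu ξ v (f v) (g v)) :
    T.mu ξ u (∑ v ∈ T.children u, f v) (∑ v ∈ T.children u, g v + 1) := by
  choose B hB using fun v : T.children u => hmu v v.2
  have hcard : Fintype.card (Σ v : T.children u, Fin (f v)) = ∑ v ∈ T.children u, f v := by
    simp only [Fintype.card_sigma, Fintype.card_fin, Finset.sum_coe_sort]
  exact hcard ▸ (T.isMuWitness_sigma fun v => T.muWitness_iff_isMuWitness.mp (hB v)).mu

lemma exists_children_mu_of_isMuWitness {ι : Type} [Fintype ι] [Nonempty ι]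
    {A : ι → Finset V} (hA : T.IsMuWitness ξ u A l) (hu : ∀ i, u ∉ A i) :
    ∃ f g : V → ℕ, (∑ v ∈ T.children u, f v) = Fintype.card ι ∧
      (∑ v ∈ T.children u, g v) + 1 = l ∧ ∀ v ∈ T.children u, T.mu ξ v (f v) (g v) := by
  choose ch hch hAch using fun i =>
    T.exists_child_subset_desc (hA.connectedIn i) (hA.subset_desc i) (hu i)
  have huX : u ∉ Finset.univ.biUnion A := by simpa using hu
  have hres := T.card_desc_sdiff huX ▸ hA.card_residue_le
  obtain ⟨g, hle, hg⟩ := Finset.exists_le_sum_eq_of_sum_le (s := T.children u)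
    ⟨_, hch (Classical.arbitrary ι)⟩ (Nat.le_sub_one_of_lt hres)
  refine ⟨fun v => Fintype.card {i // ch i = v}, g, ?_, by omega, fun v hv => ?_⟩
  · simp only [Fintype.card_subtype]
    rw [← Finset.card_univ]
    exact (Finset.card_eq_sum_card_fiberwise fun i _ => hch i).symm
  · have hwit := hA.restrict_child hch hAch hv
    exact { hwit with card_residue_le := hwit.card_residue_le.trans (hle v) }.mu

end MuWitness

end RTree

theorem stmt12_general {V : Type} [Fintype V] [DecidableEq V] (T : RTree V)
    (ξ : ℚ) (u : V) (k l : ℕ) (hk : 1 ≤ k) :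
    T.mu ξ u k l ↔
      (T.Gamma ξ u k l ≤ (((ξ * T.wsum (T.desc u) - T.c u : ℚ) : ℝ) : EReal) ∨
       ∃ f g : V → ℕ, (∑ v ∈ T.children u, f v) = k ∧ (∑ v ∈ T.children u, g v) + 1 = l ∧
         ∀ v ∈ T.children u, T.mu ξ v (f v) (g v)) := by
  constructor
  · rintro ⟨A, hA⟩
    by_cases hu : ∃ i, u ∈ A i
    · obtain ⟨i, hi⟩ := hu
      exact Or.inl (T.Gamma_le_of_muWitness_of_mem hA hi)
    · have : Nonempty (Fin k) := ⟨⟨0, hk⟩⟩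
      simpa using Or.inr (T.exists_children_mu_of_isMuWitness
        (T.muWitness_iff_isMuWitness.mp hA) (not_exists.mp hu))
  · rintro (hΓ | ⟨f, g, rfl, rfl, hmu⟩)
    · exact T.mu_of_Gamma_le hΓ
    · exact T.mu_of_forall_children_mu hmu

/-- characterization of μ, Lemma 1: `μ_ξ(u,k,l) = 1` iff either
`Γ_ξ(u,k,l) ≤ ξ·ω(T_u) − c(e_u)`, or there exist `k_i` with `Σ k_i = k` and
`l_i` with `Σ l_i = l − 1` (written `Σ l_i + 1 = l`) such that
`μ_ξ(u_i,k_i,l_i) = 1` for every child `u_i` of `u`. -/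
theorem stmt12 {V : Type} [Fintype V] [DecidableEq V] (T : RTree V)
    (ξ : ℚ) (hξ : 0 ≤ ξ) (u : V) (k l : ℕ) (hk : 1 ≤ k) :
    T.mu ξ u k l ↔
      (T.Gamma ξ u k l ≤ (((ξ * T.wsum (T.desc u) - T.c u : ℚ) : ℝ) : EReal) ∨
       ∃ f g : V → ℕ, (∑ v ∈ T.children u, f v) = k ∧ (∑ v ∈ T.children u, g v) + 1 = l ∧
         ∀ v ∈ T.children u, T.mu ξ v (f v) (g v)) :=
  stmt12_general T ξ u k l hk
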